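/- Let ψ : R → Σ³ be an injective map satisfying, for all x ∈ R, ψ(x)ᶜ = ψ(x+δ) and ψ(x)ʳ = ψ(σ(x)). Let C ⊆ Rⁿ be an R-submodule such that (δ,δ,…,δ) ∈ C and ρ(C) ⊆ C. Then the DNA code D = ψ(C) ⊆ Σ^{3n} satisfies: |D| = |C|; D is closed under the reverse map s ↦ sʳ and under the reverse-complement map s ↦ sʳᶜ; consequently, for all c₁,c₂ ∈ D with c₁ʳ ≠ c₂ one has d_H(c₁ʳ,c₂) ≥ d, and for all c₁,c₂ ∈ D with c₁ʳᶜ ≠ c₂ one has d_H(c₁ʳᶜ,c₂) ≥ d, where d is the minimum Hamming distance between distinct codewords of D. -/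

import Mathlib

open Polynomial

noncomputable section

/-- The ring `R = ℤ₄[u]/(u³ − 1)`. -/
abbrev R : Type := Polynomial (ZMod 4) ⧸ Ideal.span ({Polynomial.X ^ 3 - 1} : Set (Polynomial (ZMod 4)))

/-- The image `u` of the variable in `R`. -/
def u : R := Ideal.Quotient.mk _ Polynomial.X

instance : DecidableEq R := Classical.decEq R

lemma u_pow_three : u ^ 3 = 1 := by
  have h : (Ideal.Quotient.mk (Ideal.span ({Polynomial.X ^ 3 - 1} : Set (Polynomial (ZMod 4))))
      (Polynomial.X ^ 3 - 1) : R) = 0 :=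
    Ideal.Quotient.eq_zero_iff_mem.mpr (Ideal.subset_span rfl)
  have h2 : (u ^ 3 - 1 : R) = 0 := by
    simpa [u, map_sub, map_pow] using h
  linear_combination h2

/-- The ring automorphism `σ` of `R` determined by `σ(u) = u²`. -/
def sigmaR : R →+* R :=
  Ideal.Quotient.lift _ (Polynomial.aeval (u ^ 2)).toRingHom (by
    intro p hp
    obtain ⟨q, rfl⟩ := Ideal.mem_span_singleton.mp hp
    have h6 : ((u ^ 2) ^ 3 : R) = 1 := by
      rw [← pow_mul]
      have : (u : R) ^ (2 * 3) = (u ^ 3) ^ 2 := by ring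
      rw [this, u_pow_three, one_pow]
    simp [map_mul, map_sub, map_pow, h6])

/-- The element `δ = 2 + 2u + 2u²` of `R`. -/
def δR : R := 2 + 2 * u + 2 * u ^ 2

/-- The map `ρ : Rⁿ → Rⁿ`, reversing coordinates and applying `σ` coordinatewise. -/
def ρmap (n : ℕ) (x : Fin n → R) : Fin n → R := fun i => sigmaR (x (Fin.rev i))

/-- The 4-letter DNA alphabet. -/
inductive DNA : Type
  | A | C | G | T
deriving DecidableEq, Inhabited, Repr

/-- Watson–Crick complement of a DNA nucleotide. -/
def DNA.compl : DNA → DNA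
  | .A => .T
  | .T => .A
  | .C => .G
  | .G => .C

/-- Complement of a DNA string. -/
def complStr (s : List DNA) : List DNA := s.map DNA.compl

/-- Reverse of a DNA string. -/
def revStr (s : List DNA) : List DNA := s.reverse

/-- Reverse-complement of a DNA string. -/
def rcStr (s : List DNA) : List DNA := s.reverse.map DNA.compl

/-- Hamming distance between two DNA strings (of equal length). -/
def dH (s t : List DNA) : ℕ := ((s.zip t).filter fun p => p.1 ≠ p.2).length

/-- GC-content of a DNA string: the number of positions carrying `G` or `C`. -/
def gcContent (s : List DNA) : ℕ := (s.filter fun d => d = DNA.G ∨ d = DNA.C).length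

/-- A DNA string has no homopolymer run of length greater than `2` iff it has no three
consecutive equal symbols. -/
def NoHomopolymer3 (s : List DNA) : Prop := ¬ ∃ (l r : List DNA) (a : DNA), s = l ++ [a, a, a] ++ r

/-- Blockwise extension of a map `ψ : R → Σ³` to vectors over `R`, by concatenation. -/
def Ψ (ψ : R → List DNA) {n : ℕ} (x : Fin n → R) : List DNA := (List.ofFn x).flatMap ψ

/-- The map `ψ₂` from the ideal `2R` to DNA strings of length `3`
(the restriction of the DNA map of Table I to `2R`; its value outside `2R` is irrelevant). -/
def ψ₂ (x : R) : List DNA :=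
  if x = 0 then [.G, .A, .G]
  else if x = 2 then [.C, .G, .A]
  else if x = 2 * u then [.G, .T, .G]
  else if x = 2 * u ^ 2 then [.A, .G, .C]
  else if x = 2 + 2 * u then [.T, .C, .G]
  else if x = 2 + 2 * u ^ 2 then [.C, .A, .C]
  else if x = 2 * u + 2 * u ^ 2 then [.G, .C, .T]
  else [.C, .T, .C]

/-- The rows of the Reed–Muller type generator matrix `G_{1,m}` over `R` (with parameter `z`):
`Gmat z m i j` is the entry of `G_{1,m}` in row `i` and column `j`.  Here `G_{1,0} = [z]` and
`G_{1,m+1} = [[G_{1,m}, G_{1,m}], [0 … 0, z … z]]`, which for `m = 1` gives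
`G_{1,1} = [[z,z],[0,z]]`. -/
def Gmat (z : R) : (m : ℕ) → Fin (m + 1) → Fin (2 ^ m) → R
  | 0, _, _ => z
  | m + 1, i, j =>
    if hi : (i : ℕ) < m + 1 then
      Gmat z m ⟨i, hi⟩ ⟨(j : ℕ) % 2 ^ m, Nat.mod_lt _ (Nat.two_pow_pos m)⟩
    else if (j : ℕ) < 2 ^ m then 0 else z

/-- The Reed–Muller type code `R(1,m)`: the `R`-submodule of `R^{2^m}` generated by the rows
of `G_{1,m}`. -/
def RM (z : R) (m : ℕ) : Submodule R (Fin (2 ^ m) → R) := Submodule.span R (Set.range (Gmat z m))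

/-- Hamming weight of a vector over `R`. -/
def wt {N : ℕ} (c : Fin N → R) : ℕ := (Finset.univ.filter fun j => c j ≠ 0).card

/-- Hamming distance between two vectors over `R`. -/
def hdistR {N : ℕ} (c c' : Fin N → R) : ℕ := (Finset.univ.filter fun j => c j ≠ c' j).card

/-- Coordinate reversal of a vector over `R`. -/
def revVec {N : ℕ} (c : Fin N → R) : Fin N → R := fun j => c (Fin.rev j)

/-- `a + bu + cu²` as an element of `R`, for `a, b, c ∈ ℤ₄`. -/
def toR (a b c : ZMod 4) : R :=
  algebraMap (ZMod 4) R a + algebraMap (ZMod 4) R b * u + algebraMap (ZMod 4) R c * u ^ 2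

end

/-! Since all codewords `ψ x` have the same length, the blockwise encoding `Ψ ψ` is injective.
Reversing `Ψ ψ x` reverses the order of the blocks and each block, giving `Ψ ψ (ρ x)`, and
complementing it adds `δ` in every coordinate, so closure of `C` under `ρ` and under translation
by `(δ, …, δ)` passes to `D`. -/

theorem List.reverse_ofFn {α : Type*} {n : ℕ} (f : Fin n → α) :
    (List.ofFn f).reverse = List.ofFn (f ∘ Fin.rev) := by
  simp only [List.ofFn_eq_map, ← List.map_reverse, List.finRange_reverse, List.map_map]

theorem List.eq_of_flatMap_eq_of_length_eq {α β : Type*} {f : α → List β}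
    (hf : Function.Injective f) (hlen : ∀ a b, (f a).length = (f b).length) :
    ∀ {l₁ l₂ : List α}, l₁.length = l₂.length → l₁.flatMap f = l₂.flatMap f → l₁ = l₂
  | [], [], _, _ => rfl
  | a :: l₁, b :: l₂, hl, h => by
    obtain ⟨hab, htail⟩ := List.append_inj h (hlen a b)
    rw [hf hab, eq_of_flatMap_eq_of_length_eq hf hlen (by simpa using hl) htail]

section Encoding

variable {ψ : R → List DNA} {n : ℕ}

theorem Ψ_comp (f : R → R) (x : Fin n → R) : Ψ ψ (f ∘ x) = (List.ofFn x).flatMap (ψ ∘ f) := by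
  rw [Ψ, ← List.map_ofFn, List.flatMap_map]
  rfl

theorem Ψ_injective (hinj : Function.Injective ψ) (hlen : ∀ x y, (ψ x).length = (ψ y).length) :
    Function.Injective (Ψ ψ (n := n)) := fun _ _ h =>
  List.ofFn_injective (List.eq_of_flatMap_eq_of_length_eq hinj hlen (by simp) h)

theorem revStr_Ψ (hrev : ∀ x, revStr (ψ x) = ψ (sigmaR x)) (x : Fin n → R) :
    revStr (Ψ ψ x) = Ψ ψ (ρmap n x) := by
  change _ = Ψ ψ (sigmaR ∘ x ∘ Fin.rev)
  rw [Ψ_comp, revStr, Ψ, List.reverse_flatMap, List.reverse_ofFn]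
  exact List.flatMap_congr fun a _ => hrev a

theorem complStr_Ψ (hcompl : ∀ x, complStr (ψ x) = ψ (x + δR)) (x : Fin n → R) :
    complStr (Ψ ψ x) = Ψ ψ (x + fun _ => δR) := by
  change _ = Ψ ψ ((· + δR) ∘ x)
  rw [Ψ_comp, complStr, Ψ, List.map_flatMap]
  exact List.flatMap_congr fun a _ => hcompl a

theorem rcStr_Ψ (hcompl : ∀ x, complStr (ψ x) = ψ (x + δR))
    (hrev : ∀ x, revStr (ψ x) = ψ (sigmaR x)) (x : Fin n → R) :
    rcStr (Ψ ψ x) = Ψ ψ (ρmap n x + fun _ => δR) := by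
  rw [← complStr_Ψ hcompl, ← revStr_Ψ hrev]
  rfl

end Encoding

/-- If `ψ : R → Σ³` is injective with `ψ(x)ᶜ = ψ(x + δ)` and `ψ(x)ʳ = ψ(σ(x))`, and `C ⊆ Rⁿ`
is an `R`-submodule with `(δ, …, δ) ∈ C` and `ρ(C) ⊆ C`, then `D = ψ(C)` has `|D| = |C|`, is
closed under reverse and reverse-complement, and consequently for the minimum Hamming distance
`d` of `D`: `d_H(c₁ʳ, c₂) ≥ d` whenever `c₁ʳ ≠ c₂` and `d_H(c₁ʳᶜ, c₂) ≥ d` whenever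
`c₁ʳᶜ ≠ c₂`, for `c₁, c₂ ∈ D`. -/
theorem stmt7 (n : ℕ) (ψ : R → List DNA) (hlen : ∀ x : R, (ψ x).length = 3)
    (hinj : Function.Injective ψ)
    (hcompl : ∀ x : R, complStr (ψ x) = ψ (x + δR))
    (hrev : ∀ x : R, revStr (ψ x) = ψ (sigmaR x))
    (C : Submodule R (Fin n → R)) (hδ : (fun _ : Fin n => δR) ∈ C)
    (hρ : ∀ y ∈ C, ρmap n y ∈ C)
    (D : Set (List DNA)) (hD : D = (fun x : Fin n → R => Ψ ψ x) '' (C : Set (Fin n → R))) :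
    Nat.card D = Nat.card C ∧
    (∀ s ∈ D, revStr s ∈ D) ∧
    (∀ s ∈ D, rcStr s ∈ D) ∧
    (∀ c₁ ∈ D, ∀ c₂ ∈ D, revStr c₁ ≠ c₂ →
      sInf {k : ℕ | ∃ s ∈ D, ∃ t ∈ D, s ≠ t ∧ dH s t = k} ≤ dH (revStr c₁) c₂) ∧
    (∀ c₁ ∈ D, ∀ c₂ ∈ D, rcStr c₁ ≠ c₂ →
      sInf {k : ℕ | ∃ s ∈ D, ∃ t ∈ D, s ≠ t ∧ dH s t = k} ≤ dH (rcStr c₁) c₂) := by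
  subst hD
  have hrevD : Set.MapsTo revStr (Ψ ψ '' (C : Set (Fin n → R))) (Ψ ψ '' C) :=
    Function.Semiconj.mapsTo_image (fun x => (revStr_Ψ hrev x).symm) fun x hx => hρ x hx
  have hrcD : Set.MapsTo rcStr (Ψ ψ '' (C : Set (Fin n → R))) (Ψ ψ '' C) :=
    Function.Semiconj.mapsTo_image (fun x => (rcStr_Ψ hcompl hrev x).symm)
      fun x hx => C.add_mem (hρ x hx) hδ
  refine ⟨?_, hrevD, hrcD, ?_, ?_⟩
  · rw [Nat.card_image_of_injective (Ψ_injective hinj fun x y => by rw [hlen, hlen])]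
    rfl
  · exact fun c₁ h₁ c₂ h₂ hne => Nat.sInf_le ⟨_, hrevD h₁, c₂, h₂, hne, rfl⟩
  · exact fun c₁ h₁ c₂ h₂ hne => Nat.sInf_le ⟨_, hrcD h₁, c₂, h₂, hne, rfl⟩
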